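/- Puncturing the second output of the basic polarization block: if W₂ is the zero-capacity (punctured) channel W₀ and W₁ is any B-DMC, then the bit channels of the single-step polar transform satisfy I(W⁻) = 0 and I(W⁺) = I(W₁). -/

import Mathlib

/-- A binary-input discrete memoryless channel (B-DMC) with finite output alphabet `Y`:
nonnegative transition probabilities summing to one for each input. -/
def IsBDMC {Y : Type} [Fintype Y] (W : ZMod 2 → Y → ℝ) : Prop :=
  (∀ x y, 0 ≤ W x y) ∧ ∀ x, ∑ y, W x y = 1

/-- The symmetric capacity `I(W)` of a B-DMC (terms with `W x y = 0` vanish automatically). -/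
noncomputable def symCap {Y : Type} [Fintype Y] (W : ZMod 2 → Y → ℝ) : ℝ :=
  ∑ x : ZMod 2, ∑ y, (1 / 2) * W x y * Real.logb 2 (W x y / ((W 0 y + W 1 y) / 2))

/-- The Bhattacharyya parameter `Z(W)` of a B-DMC. -/
noncomputable def bhat {Y : Type} [Fintype Y] (W : ZMod 2 → Y → ℝ) : ℝ :=
  ∑ y, Real.sqrt (W 0 y * W 1 y)

/-- The first (minus) bit channel of the single-step polar transform of `W₁` and `W₂`. -/
noncomputable def polarMinus {Y₁ Y₂ : Type} (W₁ : ZMod 2 → Y₁ → ℝ) (W₂ : ZMod 2 → Y₂ → ℝ) :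
    ZMod 2 → Y₁ × Y₂ → ℝ :=
  fun u₁ y => (1 / 2) * ∑ u₂ : ZMod 2, W₁ (u₁ + u₂) y.1 * W₂ u₂ y.2

/-- The second (plus) bit channel of the single-step polar transform of `W₁` and `W₂`. -/
noncomputable def polarPlus {Y₁ Y₂ : Type} (W₁ : ZMod 2 → Y₁ → ℝ) (W₂ : ZMod 2 → Y₂ → ℝ) :
    ZMod 2 → Y₁ × Y₂ × ZMod 2 → ℝ :=
  fun u₂ y => (1 / 2) * W₁ (y.2.2 + u₂) y.1 * W₂ u₂ y.2.1

/-- The zero-capacity (punctured) channel with singleton output alphabet. -/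
def puncturedChannel : ZMod 2 → PUnit → ℝ := fun _ _ => 1

/-! With the second output punctured, `W⁻` observes `W₁` through an input shifted by a uniform
bit, so its output law does not depend on `u₁` and it carries no information. `W⁺` reveals `u₁`;
for each value of `u₁` it is `W₁` with input shifted by `u₁` and weight `1/2`. Symmetric capacity
is additive over such a partition of the output alphabet, homogeneous under scaling and invariant
under input shifts, so `I(W⁺) = 2 · ½ · I(W₁)`. -/

open Finset Real

lemma sum_zmod_two {M : Type*} [AddCommMonoid M] (f : ZMod 2 → M) :
    ∑ x, f x = f 0 + f 1 :=
  Fin.sum_univ_two f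

section symCap

variable {Y : Type} [Fintype Y]

lemma symCap_eq_sum_logb (W : ZMod 2 → Y → ℝ) :
    symCap W = ∑ x, ∑ y, 1 / 2 * W x y * logb 2 (W x y / ((∑ x', W x' y) / 2)) := by
  simp only [symCap, sum_zmod_two]

lemma symCap_eq_zero_of_eq {W : ZMod 2 → Y → ℝ} (h : W 0 = W 1) : symCap W = 0 := by
  refine sum_eq_zero fun x _ => sum_eq_zero fun y _ => ?_
  have hx : W x y = W 0 y := by
    fin_cases x
    · rfl
    · exact congrFun h.symm y
  rw [hx, ← h, add_self_div_two]
  rcases eq_or_ne (W 0 y) 0 with h0 | h0 <;> simp [h0]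

lemma symCap_const_mul (c : ℝ) (W : ZMod 2 → Y → ℝ) :
    symCap (fun x y => c * W x y) = c * symCap W := by
  simp only [symCap, mul_sum]
  refine sum_congr rfl fun x _ => sum_congr rfl fun y _ => ?_
  rcases eq_or_ne c 0 with rfl | hc
  · simp
  · rw [← mul_add, mul_div_assoc c (W 0 y + W 1 y), mul_div_mul_left _ _ hc]
    ring

lemma symCap_comp_add_right (a : ZMod 2) (W : ZMod 2 → Y → ℝ) :
    symCap (fun x => W (x + a)) = symCap W := by
  have hsum (y : Y) : ∑ x, W (x + a) y = ∑ x, W x y := Equiv.sum_comp (Equiv.addRight a) (W · y)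
  simp only [symCap_eq_sum_logb, hsum]
  exact Equiv.sum_comp (Equiv.addRight a)
    fun x => ∑ y, 1 / 2 * W x y * logb 2 (W x y / ((∑ x', W x' y) / 2))

lemma symCap_prod_eq_sum {ι : Type} [Fintype ι] (W : ZMod 2 → Y × ι → ℝ) :
    symCap W = ∑ i, symCap (fun x y => W x (y, i)) := by
  simp only [symCap, Fintype.sum_prod_type]
  conv_rhs => rw [sum_comm]
  exact sum_congr rfl fun x _ => sum_comm

end symCap

lemma polarMinus_puncturedChannel_apply {Y₁ : Type} (W₁ : ZMod 2 → Y₁ → ℝ) (u : ZMod 2)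
    (y : Y₁ × PUnit) : polarMinus W₁ puncturedChannel u y = 1 / 2 * ∑ x, W₁ x y.1 := by
  simp only [polarMinus, puncturedChannel, mul_one]
  exact congrArg (1 / 2 * ·) (Equiv.sum_comp (Equiv.addLeft u) (W₁ · y.1))

theorem puncture_second_output_general {Y₁ : Type} [Fintype Y₁]
    (W₁ : ZMod 2 → Y₁ → ℝ) :
    symCap (polarMinus W₁ puncturedChannel) = 0 ∧
      symCap (polarPlus W₁ puncturedChannel) = symCap W₁ := by
  constructor
  · exact symCap_eq_zero_of_eq (funext fun y => by simp only [polarMinus_puncturedChannel_apply])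
  · have hplus (i : PUnit × ZMod 2) : (fun x y => polarPlus W₁ puncturedChannel x (y, i)) =
        fun x y => 1 / 2 * W₁ (x + i.2) y := by
      funext x y
      simp [polarPlus, puncturedChannel, add_comm]
    simp [symCap_prod_eq_sum, hplus, symCap_const_mul, symCap_comp_add_right]

/-- Puncturing the second output of the basic polarization block:
if `W₂` is the zero-capacity punctured channel, then `I(W⁻) = 0` and `I(W⁺) = I(W₁)`. -/
theorem puncture_second_output {Y₁ : Type} [Fintype Y₁]
    (W₁ : ZMod 2 → Y₁ → ℝ) (h₁ : IsBDMC W₁) :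
    symCap (polarMinus W₁ puncturedChannel) = 0 ∧
      symCap (polarPlus W₁ puncturedChannel) = symCap W₁ :=
  puncture_second_output_general W₁
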